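/- arXiv:2203.14361 — 7 statements merged into one kernel-verified Lean document; each statement's English description precedes it below -/
import Mathlib

section
/- Let G be a finite group and p a prime. Let H be the subgroup of G generated by all elements whose order is not divisible by p. Then H is a normal subgroup of G, the index [G : H] is a power of p, and H is generated by the Sylow q-subgroups of G for all primes q ≠ p. -/
section aux

variable {G : Type*} [Group G] [Finite G]

private lemma conj_orderOf (g x : G) : orderOf (g * x * g⁻¹) = orderOf x :=
  (SemiconjBy.orderOf_eq g (x := x) (y := g * x * g⁻¹) (by simp [SemiconjBy, mul_assoc])).symm

private lemma key_mem (p : ℕ) (hp : p.Prime) :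
    ∀ n : ℕ, ∀ g : G, orderOf g = n → ¬ p ∣ n →
      g ∈ ⨆ (q : ℕ) (_ : q.Prime) (_ : q ≠ p) (P : Sylow q G), (P : Subgroup G) := by
  intro n
  induction n using Nat.strong_induction_on with
  | _ n ih =>
    intro g hg hpn
    rcases eq_or_ne n 1 with rfl | hn1
    · have h1 : g = 1 := orderOf_eq_one_iff.mp hg
      rw [h1]; exact one_mem _
    obtain ⟨q, hq, hqn⟩ := Nat.exists_prime_and_dvd hn1
    have hn0 : n ≠ 0 := by rintro rfl; exact hpn (dvd_zero p)
    have hqp : q ≠ p := by rintro rfl; exact hpn hqn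
    set k := n.factorization q with hk
    set m := n / q ^ k with hm
    have hmul : q ^ k * m = n := Nat.ordProj_mul_ordCompl_eq_self n q
    have hqm : ¬ q ∣ m := Nat.not_dvd_ordCompl hq hn0
    have hcop : Nat.Coprime (q ^ k) m :=
      Nat.Coprime.pow_left _ (hq.coprime_iff_not_dvd.mpr hqm)
    -- a = g ^ m has order q ^ k
    have hmdvd : m ∣ n := ⟨q ^ k, by rw [← hmul, mul_comm]⟩
    have hm0 : m ≠ 0 := by
      rintro h; rw [h, mul_zero] at hmul; exact hn0 hmul.symm
    have ha : orderOf (g ^ m) = q ^ k := by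
      rw [orderOf_pow, hg, Nat.gcd_eq_right hmdvd, ← hmul,
        Nat.mul_div_cancel _ (Nat.pos_of_ne_zero hm0)]
    have hqkdvd : q ^ k ∣ n := Nat.ordProj_dvd n q
    have hb : orderOf (g ^ q ^ k) = m := by
      rw [orderOf_pow, hg, Nat.gcd_eq_right hqkdvd, hm]
    -- a is in a Sylow q-subgroup
    haveI : Fact q.Prime := ⟨hq⟩
    have hPa : IsPGroup q (Subgroup.zpowers (g ^ m)) :=
      IsPGroup.of_card (by rw [Nat.card_zpowers, ha])
    obtain ⟨Q, hQ⟩ := hPa.exists_le_sylow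
    have haK : g ^ m ∈ ⨆ (q : ℕ) (_ : q.Prime) (_ : q ≠ p) (P : Sylow q G), (P : Subgroup G) := by
      have : g ^ m ∈ (Q : Subgroup G) := hQ (Subgroup.mem_zpowers _)
      exact Subgroup.mem_iSup_of_mem q (Subgroup.mem_iSup_of_mem hq
        (Subgroup.mem_iSup_of_mem hqp (Subgroup.mem_iSup_of_mem Q this)))
    -- b = g ^ (q ^ k) handled by induction (order m < n)
    have hmlt : m < n := by
      rw [← hmul]
      have hk0 : k ≠ 0 := (Nat.Prime.factorization_pos_of_dvd hq hn0 hqn).ne'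
      have h1 : 1 < q ^ k := Nat.one_lt_pow hk0 hq.one_lt
      nlinarith [Nat.pos_of_ne_zero hm0]
    have hbK := ih m hmlt (g ^ q ^ k) hb (fun h => hpn (h.trans hmdvd))
    -- Bezout: g = (g ^ m) ^ s * (g ^ (q ^ k)) ^ t
    have hbez := Nat.gcd_eq_gcd_ab (q ^ k) m
    rw [hcop] at hbez
    have h1 : ((q ^ k : ℕ) : ℤ) * Nat.gcdA (q ^ k) m + ((m : ℕ) : ℤ) * Nat.gcdB (q ^ k) m
        = 1 := by exact_mod_cast hbez.symm
    have hgeq : g = (g ^ q ^ k) ^ (Nat.gcdA (q ^ k) m) * (g ^ m) ^ (Nat.gcdB (q ^ k) m) := by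
      rw [← zpow_natCast g (q ^ k), ← zpow_natCast g m, ← zpow_mul, ← zpow_mul, ← zpow_add,
        h1, zpow_one]
    rw [hgeq]
    exact mul_mem (Subgroup.zpow_mem _ hbK _) (Subgroup.zpow_mem _ haK _)

end aux

/-- Let `G` be a finite group and `p` a prime. Let `H` be the subgroup of `G`
generated by all elements whose order is not divisible by `p`. Then `H` is a normal subgroup of
`G`, the index `[G : H]` is a power of `p`, and `H` is generated by (is the supremum of) the
Sylow `q`-subgroups of `G` for all primes `q ≠ p`. -/
theorem stmt0 (G : Type*) [Group G] [Finite G] (p : ℕ) (hp : p.Prime)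
    (H : Subgroup G) (hH : H = Subgroup.closure {g : G | ¬ p ∣ orderOf g}) :
    H.Normal ∧ (∃ k : ℕ, H.index = p ^ k) ∧
      H = ⨆ (q : ℕ) (_ : q.Prime) (_ : q ≠ p) (P : Sylow q G), (P : Subgroup G) := by
  subst hH
  set S : Set G := {g : G | ¬ p ∣ orderOf g} with hS
  have hnormal : (Subgroup.closure S).Normal := by
    constructor
    intro x hx g
    have : g * x * g⁻¹ ∈ Subgroup.map (MulAut.conj g).toMonoidHom (Subgroup.closure S) :=
      ⟨x, hx, rfl⟩
    rw [MonoidHom.map_closure] at this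
    refine Subgroup.closure_mono ?_ this
    rintro y ⟨z, hz, rfl⟩
    simpa only [hS, Set.mem_setOf_eq, MulAut.conj_apply, MonoidHom.coe_coe, MulEquiv.coe_toMonoidHom,
      conj_orderOf] using hz
  refine ⟨hnormal, ?_, ?_⟩
  · -- index is a power of p
    haveI := hnormal
    haveI : Fact p.Prime := ⟨hp⟩
    have hPQ : IsPGroup p (G ⧸ Subgroup.closure S) := by
      intro x
      obtain ⟨g, rfl⟩ := QuotientGroup.mk_surjective x
      refine ⟨(orderOf g).factorization p, ?_⟩
      have hg0 : orderOf g ≠ 0 := (orderOf_pos g).ne'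
      have : g ^ p ^ (orderOf g).factorization p ∈ Subgroup.closure S := by
        apply Subgroup.subset_closure
        rw [hS, Set.mem_setOf_eq, orderOf_pow, Nat.gcd_eq_right (Nat.ordProj_dvd _ p)]
        exact Nat.not_dvd_ordCompl hp hg0
      rw [← QuotientGroup.mk_pow]
      exact (QuotientGroup.eq_one_iff _).mpr this
    obtain ⟨k, hk⟩ := IsPGroup.iff_card.mp hPQ
    exact ⟨k, by rwa [Subgroup.index]⟩
  · apply le_antisymm
    · rw [Subgroup.closure_le]
      intro g hg
      exact key_mem p hp (orderOf g) g rfl hg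
    · refine iSup_le fun q => iSup_le fun hq => iSup_le fun hqp => iSup_le fun P => ?_
      intro x hx
      apply Subgroup.subset_closure
      rw [hS, Set.mem_setOf_eq]
      obtain ⟨i, hi⟩ := P.2 ⟨x, hx⟩
      have : x ^ q ^ i = 1 := by
        have := congrArg (Subgroup.subtype (P : Subgroup G)) hi
        simpa using this
      obtain ⟨j, _, hj⟩ := (Nat.dvd_prime_pow hq).mp (orderOf_dvd_of_pow_eq_one this)
      rw [hj]
      intro hdvd
      exact hqp ((Nat.prime_dvd_prime_iff_eq hp hq).mp (hp.dvd_of_dvd_pow hdvd)).symm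
end

section
/- Let G be a finite group and p a prime. Let H be the subgroup of G generated by all elements whose order is not divisible by p. Then H has no proper normal subgroup of p-power index: if M ⊴ H and [H : M] is a power of p, then M = H. -/
/-- Let `G` be a finite group and `p` a prime. Let `H` be the subgroup of `G`
generated by all elements whose order is not divisible by `p`. Then `H` has no proper normal
subgroup of `p`-power index: if `M ⊴ H` and `[H : M]` is a power of `p`, then `M = H`. -/
theorem stmt1 (G : Type*) [Group G] [Finite G] (p : ℕ) (hp : p.Prime)
    (H : Subgroup G) (hH : H = Subgroup.closure {g : G | ¬ p ∣ orderOf g})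
    (M : Subgroup H) (hM : M.Normal) (hidx : ∃ k : ℕ, M.index = p ^ k) :
    M = ⊤ := by
  obtain ⟨k, hk⟩ := hidx
  -- Key: every x : H with p ∤ orderOf x lies in M
  have key : ∀ x : H, ¬ p ∣ orderOf x → x ∈ M := by
    intro x hx
    have h1 : orderOf (QuotientGroup.mk (s := M) x) ∣ orderOf x :=
      orderOf_map_dvd (QuotientGroup.mk' M) x
    have h2 : orderOf (QuotientGroup.mk (s := M) x) ∣ p ^ k := by
      rw [← hk]
      exact hk ▸ (hk ▸ (orderOf_dvd_natCard _ : orderOf (QuotientGroup.mk (s := M) x) ∣ Nat.card (H ⧸ M)))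
    have hcop : Nat.Coprime (orderOf x) (p ^ k) :=
      (Nat.Coprime.pow_right k ((hp.coprime_iff_not_dvd.mpr hx).symm))
    have : orderOf (QuotientGroup.mk (s := M) x) ∣ 1 :=
      Nat.dvd_gcd h1 h2 |>.trans hcop.gcd_eq_one.dvd
    have : QuotientGroup.mk (s := M) x = 1 := orderOf_eq_one_iff.mp (Nat.dvd_one.mp this)
    exact (QuotientGroup.eq_one_iff x).mp this
  -- Now show H ≤ M.map H.subtype
  have hle : H ≤ M.map H.subtype := by
    conv_lhs => rw [hH]
    refine Subgroup.closure_le _ |>.mpr ?_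
    intro g hg
    have hgH : g ∈ H := hH ▸ Subgroup.subset_closure hg
    have : orderOf (⟨g, hgH⟩ : H) = orderOf g := Subgroup.orderOf_mk g hgH
    refine ⟨⟨g, hgH⟩, key _ ?_, rfl⟩
    rw [this]; exact hg
  ext x
  simp only [Subgroup.mem_top, iff_true]
  obtain ⟨y, hy, hyx⟩ := hle x.2
  have : y = x := Subtype.ext hyx
  exact this ▸ hy
end

section
/- Let G be a finite group and A(G) its Burnside ring. For each subgroup H ≤ G let χ_H : A(G) → ℤ be the ring homomorphism sending the class of a finite G-set S to |S^H|. Then the product map χ = ∏_{[H]} χ_H : A(G) → ∏_{[H]} ℤ, over conjugacy classes of subgroups, is an injective ring homomorphism. -/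
open MulAction

section Helpers

variable {G : Type*} [Group G]

/-- Fixed points are preserved by equivariant equivalences. -/
def fpCongr {α β : Type*} [MulAction G α] [MulAction G β] (H : Subgroup G) (e : α ≃ β)
    (he : ∀ (g : G) (a : α), e (g • a) = g • e a) :
    fixedPoints H α ≃ fixedPoints H β :=
  Equiv.subtypeEquiv e (by
    intro a
    simp only [mem_fixedPoints]
    constructor
    · intro hf h
      rw [Subgroup.smul_def, ← he, ← Subgroup.smul_def, hf h]
    · intro hf h
      apply e.injective
      rw [Subgroup.smul_def, he, ← Subgroup.smul_def, hf h])

lemma fp_card_congr {α β : Type*} [MulAction G α] [MulAction G β] (H : Subgroup G) (e : α ≃ β)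
    (he : ∀ (g : G) (a : α), e (g • a) = g • e a) :
    Nat.card (fixedPoints H α) = Nat.card (fixedPoints H β) :=
  Nat.card_congr (fpCongr H e he)

/-- Fixed points of a disjoint union. -/
def fpSum (M : Type*) [Monoid M] {α β : Type*} [MulAction M α] [MulAction M β] :
    fixedPoints M (α ⊕ β) ≃ (fixedPoints M α ⊕ fixedPoints M β) where
  toFun x :=
    match x with
    | ⟨Sum.inl a, h⟩ => Sum.inl ⟨a, fun g => by
        have := h g; rwa [Sum.smul_inl, Sum.inl.injEq] at this⟩
    | ⟨Sum.inr b, h⟩ => Sum.inr ⟨b, fun g => by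
        have := h g; rwa [Sum.smul_inr, Sum.inr.injEq] at this⟩
  invFun := Sum.elim
    (fun a => ⟨Sum.inl a.1, fun g => by rw [Sum.smul_inl, a.2 g]⟩)
    (fun b => ⟨Sum.inr b.1, fun g => by rw [Sum.smul_inr, b.2 g]⟩)
  left_inv := by rintro ⟨x | x, h⟩ <;> rfl
  right_inv := by rintro (x | x) <;> rfl

/-- Fixed points of a product. -/
def fpProd (M : Type*) [Monoid M] {α β : Type*} [MulAction M α] [MulAction M β] :
    fixedPoints M (α × β) ≃ (fixedPoints M α × fixedPoints M β) where
  toFun x := (⟨x.1.1, fun g => by have := x.2 g; rw [Prod.ext_iff] at this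
                                  simpa using this.1⟩,
              ⟨x.1.2, fun g => by have := x.2 g; rw [Prod.ext_iff] at this
                                  simpa using this.2⟩)
  invFun p := ⟨(p.1.1, p.2.1), fun g => by
    rw [Prod.smul_mk, p.1.2 g, p.2.2 g]⟩
  left_inv := by rintro ⟨⟨a, b⟩, h⟩; rfl
  right_inv := by rintro ⟨⟨a, _⟩, ⟨b, _⟩⟩; rfl

lemma fp_bot (α : Type*) [MulAction G α] :
    fixedPoints (⊥ : Subgroup G) α = Set.univ := by
  ext x
  simp only [Set.mem_univ, iff_true, mem_fixedPoints]
  rintro ⟨h, hh⟩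
  rw [Subgroup.mem_bot] at hh
  subst hh
  exact one_smul G x

lemma card_fp_bot (α : Type*) [MulAction G α] :
    Nat.card (fixedPoints (⊥ : Subgroup G) α) = Nat.card α := by
  rw [fp_bot]
  exact Nat.card_congr (Equiv.Set.univ α)

end Helpers

section Orbits

variable {G : Type*} [Group G]

lemma key_stab {γ : Type*} [MulAction G γ] (c : γ) (g g' : G)
    (h : g'⁻¹ * g ∈ stabilizer G c) : g • c = g' • c := by
  rw [mem_stabilizer_iff, mul_smul] at h
  exact inv_smul_eq_iff.mp h

lemma mem_stab_of {γ : Type*} [MulAction G γ] (c : γ) (g g' : G)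
    (h : g • c = g' • c) : g'⁻¹ * g ∈ stabilizer G c := by
  rw [mem_stabilizer_iff, mul_smul, h, inv_smul_smul]

lemma orbit_equiv {α β : Type*} [MulAction G α] [MulAction G β] (a : α) (b : β)
    (hst : stabilizer G a = stabilizer G b) :
    ∃ e : orbit G a ≃ orbit G b, ∀ (g : G) (x : orbit G a), e (g • x) = g • e x := by
  classical
  set F : orbit G a → orbit G b := fun x =>
    ⟨(Classical.choose (mem_orbit_iff.mp x.2)) • b, mem_orbit b _⟩ with hFdef
  have hF : ∀ (x : orbit G a) (g : G), g • a = x.1 → F x = ⟨g • b, mem_orbit b g⟩ := by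
    intro x g hg
    apply Subtype.ext
    have h1 := mem_stab_of a (Classical.choose (mem_orbit_iff.mp x.2)) g
      ((Classical.choose_spec (mem_orbit_iff.mp x.2)).trans hg.symm)
    rw [hst] at h1
    exact key_stab b _ _ h1
  have hbij : Function.Bijective F := by
    constructor
    · intro x y hxy
      obtain ⟨gx, hgx⟩ : ∃ g : G, g • a = x.1 := mem_orbit_iff.mp x.2
      obtain ⟨gy, hgy⟩ : ∃ g : G, g • a = y.1 := mem_orbit_iff.mp y.2
      rw [hF x gx hgx, hF y gy hgy] at hxy
      have : gx • b = gy • b := Subtype.ext_iff.mp hxy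
      have h2 := mem_stab_of b gx gy this
      rw [← hst] at h2
      have : gx • a = gy • a := key_stab a _ _ h2
      apply Subtype.ext
      rw [← hgx, ← hgy, this]
    · intro y
      obtain ⟨g, hg⟩ : ∃ g : G, g • b = y.1 := mem_orbit_iff.mp y.2
      exact ⟨⟨g • a, mem_orbit a g⟩, by rw [hF ⟨g • a, mem_orbit a g⟩ g rfl]
                                        exact Subtype.ext hg⟩
  refine ⟨Equiv.ofBijective F hbij, ?_⟩
  intro g x
  obtain ⟨gx, hgx⟩ : ∃ g : G, g • a = x.1 := mem_orbit_iff.mp x.2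
  have h1 : F (g • x) = ⟨(g * gx) • b, mem_orbit b _⟩ := by
    apply hF
    rw [mul_smul, hgx]
    rfl
  show F (g • x) = g • F x
  rw [h1, hF x gx hgx]
  apply Subtype.ext
  show (g * gx) • b = g • (gx • b)
  rw [mul_smul]

instance complAction {α : Type*} [MulAction G α] (a : α) :
    MulAction G (((orbit G a)ᶜ : Set α)) where
  smul g x := ⟨g • x.1, fun hmem => x.2 (by
    obtain ⟨g', hg'⟩ := mem_orbit_iff.mp hmem
    exact mem_orbit_iff.mpr ⟨g⁻¹ * g', by rw [mul_smul, hg', inv_smul_smul]⟩)⟩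
  one_smul x := Subtype.ext (one_smul G x.1)
  mul_smul g h x := Subtype.ext (mul_smul g h x.1)

lemma compl_coe_smul {α : Type*} [MulAction G α] (a : α) (g : G)
    (x : ((orbit G a)ᶜ : Set α)) : ((g • x : ((orbit G a)ᶜ : Set α)) : α) = g • (x : α) := rfl

lemma decomp {α : Type*} [MulAction G α] (a : α) :
    ∃ e : (orbit G a ⊕ ((orbit G a)ᶜ : Set α)) ≃ α, ∀ (g : G) (x), e (g • x) = g • e x := by
  classical
  refine ⟨Equiv.Set.sumCompl (orbit G a), ?_⟩
  rintro g (x | x)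
  · rw [Sum.smul_inl]
    simp only [Equiv.Set.sumCompl_apply_inl]
    rfl
  · rw [Sum.smul_inr]
    simp only [Equiv.Set.sumCompl_apply_inr]
    rfl

end Orbits

section Main

universe u v

variable {G : Type*} [Group G]

lemma equivariant_symm {α β : Type*} [MulAction G α] [MulAction G β] (e : α ≃ β)
    (he : ∀ (g : G) (a : α), e (g • a) = g • e a) (g : G) (b : β) :
    e.symm (g • b) = g • e.symm b := by
  apply e.injective
  rw [he, e.apply_symm_apply, e.apply_symm_apply]

lemma aux_pick [Finite G] {α β : Type*} [MulAction G α] [MulAction G β] (a : α)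
    (hmax : ∀ y : β, Nat.card (stabilizer G y) ≤ Nat.card (stabilizer G a))
    (hne : (fixedPoints (stabilizer G a) β).Nonempty) :
    ∃ b : β, stabilizer G a = stabilizer G b := by
  obtain ⟨b, hb⟩ := hne
  refine ⟨b, ?_⟩
  have hle : stabilizer G a ≤ stabilizer G b := by
    intro g hg
    have := (mem_fixedPoints.mp hb) ⟨g, hg⟩
    rw [Subgroup.smul_def] at this
    exact mem_stabilizer_iff.mpr this
  exact Subgroup.eq_of_le_of_card_ge hle (hmax b)

lemma main_induction (G : Type*) [Group G] [Finite G] :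
    ∀ (n : ℕ) (α : Type u) (β : Type v) [Finite α] [Finite β] [MulAction G α] [MulAction G β],
    Nat.card α ≤ n →
    (∀ H : Subgroup G, Nat.card (fixedPoints H α) = Nat.card (fixedPoints H β)) →
    ∃ e : α ≃ β, ∀ (g : G) (a : α), e (g • a) = g • e a := by
  intro n
  induction n with
  | zero =>
    intro α β _ _ _ _ hcard hmarks
    have hcards : Nat.card β = Nat.card α := by
      rw [← card_fp_bot (G := G) α, ← card_fp_bot (G := G) β, hmarks ⊥]
    have h0 : Nat.card α = 0 := Nat.le_zero.mp hcard
    have hα : IsEmpty α := by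
      rw [← not_nonempty_iff]
      intro h
      exact absurd h0 Nat.card_pos.ne'
    have hβ : IsEmpty β := by
      rw [← not_nonempty_iff]
      intro h
      exact absurd (hcards.trans h0) Nat.card_pos.ne'
    exact ⟨Equiv.equivOfIsEmpty α β, fun g a => (hα.false a).elim⟩
  | succ n ih =>
    intro α β _ _ _ _ hcard hmarks
    have hcards : Nat.card β = Nat.card α := by
      rw [← card_fp_bot (G := G) α, ← card_fp_bot (G := G) β, hmarks ⊥]
    by_cases h0 : Nat.card α = 0
    · have hα : IsEmpty α := by
        rw [← not_nonempty_iff]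
        intro h
        exact absurd h0 Nat.card_pos.ne'
      have hβ : IsEmpty β := by
        rw [← not_nonempty_iff]
        intro h
        exact absurd (hcards.trans h0) Nat.card_pos.ne'
      exact ⟨Equiv.equivOfIsEmpty α β, fun g a => (hα.false a).elim⟩
    haveI hne_a : Nonempty α := (Nat.card_ne_zero.mp h0).1
    haveI hne_b : Nonempty β := by
      have : Nat.card β ≠ 0 := by rw [hcards]; exact h0
      exact (Nat.card_ne_zero.mp this).1
    -- pick a point with maximal stabilizer among both G-sets
    obtain ⟨x₀, hx₀⟩ := Finite.exists_max
      (Sum.elim (fun x : α => Nat.card (stabilizer G x))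
        (fun y : β => Nat.card (stabilizer G y)))
    have claim : ∃ (a : α) (b : β), stabilizer G a = stabilizer G b := by
      cases x₀ with
      | inl a =>
        have hfa : a ∈ fixedPoints (stabilizer G a) α := by
          intro h
          rw [Subgroup.smul_def]
          exact h.2
        have hpos : Nat.card (fixedPoints (stabilizer G a) α) ≠ 0 := by
          haveI : Nonempty (fixedPoints (stabilizer G a) α) := ⟨⟨a, hfa⟩⟩
          exact Nat.card_pos.ne'
        have hne : (fixedPoints (stabilizer G a) β).Nonempty := by
          rw [← Set.nonempty_coe_sort]
          have : Nat.card (fixedPoints (stabilizer G a) β) ≠ 0 := by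
            rw [← hmarks]; exact hpos
          exact (Nat.card_ne_zero.mp this).1
        obtain ⟨b, hb⟩ := aux_pick a (fun y => hx₀ (Sum.inr y)) hne
        exact ⟨a, b, hb⟩
      | inr b =>
        have hfb : b ∈ fixedPoints (stabilizer G b) β := by
          intro h
          rw [Subgroup.smul_def]
          exact h.2
        have hpos : Nat.card (fixedPoints (stabilizer G b) β) ≠ 0 := by
          haveI : Nonempty (fixedPoints (stabilizer G b) β) := ⟨⟨b, hfb⟩⟩
          exact Nat.card_pos.ne'
        have hne : (fixedPoints (stabilizer G b) α).Nonempty := by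
          rw [← Set.nonempty_coe_sort]
          have : Nat.card (fixedPoints (stabilizer G b) α) ≠ 0 := by
            rw [hmarks]; exact hpos
          exact (Nat.card_ne_zero.mp this).1
        obtain ⟨a, ha⟩ := aux_pick b (fun y => hx₀ (Sum.inl y)) hne
        exact ⟨a, b, ha.symm⟩
    obtain ⟨a, b, hst⟩ := claim
    obtain ⟨eo, heo⟩ := orbit_equiv a b hst
    obtain ⟨dα, hdα⟩ := decomp (G := G) a
    obtain ⟨dβ, hdβ⟩ := decomp (G := G) b
    -- the marks of the complements agree
    have hmarks' : ∀ H : Subgroup G,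
        Nat.card (fixedPoints H (((orbit G a)ᶜ : Set α))) =
          Nat.card (fixedPoints H (((orbit G b)ᶜ : Set β))) := by
      intro H
      have h1 : Nat.card (fixedPoints H α) =
          Nat.card (fixedPoints H (orbit G a)) +
            Nat.card (fixedPoints H (((orbit G a)ᶜ : Set α))) := by
        rw [← fp_card_congr H dα hdα, Nat.card_congr (fpSum H), Nat.card_sum]
      have h2 : Nat.card (fixedPoints H β) =
          Nat.card (fixedPoints H (orbit G b)) +
            Nat.card (fixedPoints H (((orbit G b)ᶜ : Set β))) := by
        rw [← fp_card_congr H dβ hdβ, Nat.card_congr (fpSum H), Nat.card_sum]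
      have h3 : Nat.card (fixedPoints H (orbit G a)) =
          Nat.card (fixedPoints H (orbit G b)) := fp_card_congr H eo heo
      have h4 := hmarks H
      omega
    -- the complement is smaller
    have hcomp : Nat.card (((orbit G a)ᶜ : Set α)) ≤ n := by
      have h4 : Nat.card (orbit G a) + Nat.card (((orbit G a)ᶜ : Set α)) = Nat.card α := by
        rw [← Nat.card_sum, Nat.card_congr dα]
      haveI : Nonempty (orbit G a) := ⟨⟨a, mem_orbit_self a⟩⟩
      have h5 : 0 < Nat.card (orbit G a) := Nat.card_pos
      omega
    obtain ⟨ec, hec⟩ := ih (((orbit G a)ᶜ : Set α)) (((orbit G b)ᶜ : Set β)) hcomp hmarks'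
    have hsum : ∀ (g : G) (y), (Equiv.sumCongr eo ec) (g • y) = g • (Equiv.sumCongr eo ec) y := by
      rintro g (y | y)
      · rw [Sum.smul_inl]
        simp only [Equiv.sumCongr_apply, Sum.map_inl]
        rw [heo, Sum.smul_inl]
      · rw [Sum.smul_inr]
        simp only [Equiv.sumCongr_apply, Sum.map_inr]
        rw [hec, Sum.smul_inr]
    refine ⟨dα.symm.trans ((Equiv.sumCongr eo ec).trans dβ), ?_⟩
    intro g x
    simp only [Equiv.trans_apply]
    rw [equivariant_symm dα hdα, hsum, hdβ]

end Main



/-- For a finite group `G`, the mark homomorphism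
`χ = ∏_[H] χ_H : A(G) → ∏_[H] ℤ`, `χ_H([S]) = |S^H|`, on the Burnside ring `A(G)` is an
injective ring homomorphism.  Concretely: the marks are additive on disjoint unions and
multiplicative on products of finite `G`-sets, and two finite `G`-sets with the same number of
`H`-fixed points for every subgroup `H ≤ G` are equivariantly isomorphic (which is exactly
injectivity of `χ` on the Burnside ring, the monoid of finite `G`-sets being cancellative). -/
theorem stmt5 (G : Type*) [Group G] [Finite G]
    (α β : Type*) [Finite α] [Finite β] [MulAction G α] [MulAction G β] :
    (∀ H : Subgroup G,
        Nat.card (MulAction.fixedPoints H (α ⊕ β)) =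
          Nat.card (MulAction.fixedPoints H α) + Nat.card (MulAction.fixedPoints H β)) ∧
    (∀ H : Subgroup G,
        Nat.card (MulAction.fixedPoints H (α × β)) =
          Nat.card (MulAction.fixedPoints H α) * Nat.card (MulAction.fixedPoints H β)) ∧
    ((∀ H : Subgroup G,
        Nat.card (MulAction.fixedPoints H α) = Nat.card (MulAction.fixedPoints H β)) →
      ∃ e : α ≃ β, ∀ (g : G) (a : α), e (g • a) = g • e a) := by
  refine ⟨fun H => ?_, fun H => ?_, fun h => ?_⟩
  · rw [Nat.card_congr (fpSum H), Nat.card_sum]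
  · rw [Nat.card_congr (fpProd H), Nat.card_prod]
  · exact main_induction G (Nat.card α) α β le_rfl h
end

section
/- Let G be a finite group. After inverting |G| (i.e., tensoring with ℤ[1/|G|]), the mark homomorphism χ : A(G) ⊗ ℤ[1/|G|] → ∏_{[H]} ℤ[1/|G|], indexed by conjugacy classes of subgroups H ≤ G, is a ring isomorphism. -/
open scoped Pointwise

/-!
The table of marks is triangular: ordering the representatives by cardinality, `K` can fix a
point of `G ⧸ L` only if `K` is subconjugate to `L`, which for `|L| ≤ |K|` forces `K` and `L` to
be conjugate. Hence the determinant is the product of the diagonal marks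
`|(G ⧸ L)^L| = |N_G(L) ⧸ L|`, each of which divides `|G|` and so becomes a unit in `ℤ[1/|G|]`.
-/

theorem Matrix.det_eq_prod_diag_of_eq_zero_of_le {ι R α : Type*} [Fintype ι] [DecidableEq ι]
    [CommRing R] [LinearOrder α] (M : Matrix ι ι R) (w : ι → α)
    (hM : ∀ i j, i ≠ j → w j ≤ w i → M i j = 0) :
    M.det = ∏ i, M i i := by
  let e₀ : Fin (Fintype.card ι) ≃ ι := (Fintype.equivFin ι).symm
  let e : Fin (Fintype.card ι) ≃ ι := (Tuple.sort (w ∘ e₀)).trans e₀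
  have hmono : Monotone (w ∘ e) := Tuple.monotone_sort (w ∘ e₀)
  rw [← det_submatrix_equiv_self e M, det_of_isUpperTriangular]
  · exact Equiv.prod_comp e fun i => M i i
  · intro i j hji
    exact hM (e i) (e j) (e.injective.ne hji.ne') (hmono hji.le)

namespace Subgroup

variable {G : Type*} [Group G]

theorem exists_le_conj_smul_of_fixedPoints_nonempty {K L : Subgroup G}
    (h : (MulAction.fixedPoints K (G ⧸ L)).Nonempty) :
    ∃ g : G, K ≤ MulAut.conj g • L := by
  obtain ⟨x, hx⟩ := h
  obtain ⟨g, rfl⟩ := QuotientGroup.mk_surjective x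
  refine ⟨g, fun k hk => ?_⟩
  have hkg : ((k * g : G) : G ⧸ L) = (g : G ⧸ L) := hx ⟨k, hk⟩
  rw [mem_pointwise_smul_iff_inv_smul_mem]
  simpa [mul_assoc] using L.inv_mem (QuotientGroup.eq.mp hkg)

theorem fixedPoints_quotient_eq_empty [Finite G] {K L : Subgroup G}
    (hcard : Nat.card L ≤ Nat.card K) (hconj : ∀ g : G, K ≠ MulAut.conj g • L) :
    MulAction.fixedPoints K (G ⧸ L) = ∅ := by
  refine Set.not_nonempty_iff_eq_empty.mp fun hfix => ?_
  obtain ⟨g, hle⟩ := exists_le_conj_smul_of_fixedPoints_nonempty hfix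
  have hcard' : Nat.card (MulAut.conj g • L : Subgroup G) ≤ Nat.card K := by
    rwa [← Nat.card_congr (equivSMul (MulAut.conj g) L).toEquiv]
  exact hconj g (eq_of_le_of_card_ge hle hcard')

theorem card_fixedPoints_quotient_self_dvd_card [Finite G] (L : Subgroup G) :
    Nat.card (MulAction.fixedPoints L (G ⧸ L)) ∣ Nat.card G := by
  rw [Nat.card_congr (Sylow.fixedPointsMulLeftCosetsEquivQuotient L)]
  exact (card_quotient_dvd_card _).trans (card_subgroup_dvd_card _)

end Subgroup

/-- For a finite group `G`, after inverting `|G|` the mark homomorphism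
`χ : A(G) ⊗ ℤ[1/|G|] → ∏_[H] ℤ[1/|G|]` is a ring isomorphism.  Since `A(G)` is the free
`ℤ`-module on the conjugacy classes of subgroups `[H]` with basis `{G/H}`, and `χ` has matrix
`(|(G/L)^K|)_{[K],[L]}` in these bases, this says exactly that the table of marks, indexed by a
system `R` of representatives of the conjugacy classes of subgroups, becomes invertible over
`ℤ[1/|G|]`, i.e. its determinant is a unit in `ℤ[1/|G|] = (ℤ localized away from |G|)`. -/
theorem stmt6 (G : Type*) [Group G] [Finite G] [DecidableEq (Subgroup G)]
    (R : Finset (Subgroup G))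
    (hR : ∀ H : Subgroup G, ∃! K, K ∈ R ∧ ∃ g : G, K = MulAut.conj g • H) :
    IsUnit (algebraMap ℤ (Localization.Away ((Nat.card G : ℤ)))
      (Matrix.det (fun K L : R =>
        (Nat.card (MulAction.fixedPoints ((K : Subgroup G)) (G ⧸ (L : Subgroup G))) : ℤ)))) := by
  have hnotConj : ∀ K L : R, K ≠ L → ∀ g : G, (K : Subgroup G) ≠ MulAut.conj g • L := by
    rintro K L hKL g hconj
    obtain ⟨_, _, hunique⟩ := hR L
    have hK : (K : Subgroup G) = _ := hunique K ⟨K.2, g, hconj⟩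
    have hL : (L : Subgroup G) = _ := hunique L ⟨L.2, 1, by simp⟩
    exact hKL (Subtype.ext (hK.trans hL.symm))
  let marks : Matrix R R ℤ := fun K L =>
    Nat.card (MulAction.fixedPoints (K : Subgroup G) (G ⧸ (L : Subgroup G)))
  have hdet : marks.det = ∏ L, marks L L :=
    marks.det_eq_prod_diag_of_eq_zero_of_le (fun K => Nat.card (K : Subgroup G))
      fun K L hKL hcard => by
        simp [marks, Subgroup.fixedPoints_quotient_eq_empty hcard (hnotConj K L hKL)]
  change IsUnit (algebraMap ℤ _ marks.det)
  rw [hdet, map_prod, IsUnit.prod_univ_iff]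
  intro L
  refine IsLocalization.Away.isUnit_of_dvd (Nat.card G : ℤ) ?_
  exact Int.natCast_dvd_natCast.mpr (Subgroup.card_fixedPoints_quotient_self_dvd_card L.1)
end

section
/- Let G be a finite group, p a prime dividing |G|, H ∈ 𝓕 a subgroup of G, and let M ≤ H be the subgroup generated by all elements of H whose order is not divisible by p. Then there exists a subgroup L of G containing H such that L/M is a p-group (so L = P ⋉ M with P a Sylow p-subgroup of the relevant Weyl group), M ⊴ L, and the number of H-fixed points |(G/L)^H| is not divisible by p. -/
/-!
`H` normalises `M` and `H/M` is a `p`-group, so `H/M` lies in a Sylow `p`-subgroup `P/M` of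
`N_G(M)/M`; take `L` to be the preimage of `P` in `N_G(M)`. If `H` fixes `gL`, then
`g⁻¹Hg ≤ L`, and as `L/M` is a `p`-group the `p'`-elements of `g⁻¹Hg`, which generate `g⁻¹Mg`,
lie in `M`; hence `g ∈ N_G(M)`. So `(G/L)^H = (N_G(M)/L)^H`, on which `H` acts through the
`p`-group `H/M`, and `|(N_G(M)/L)^H| ≡ |N_G(M) : L| = |N_G(M)/M : P| ≢ 0 (mod p)`.
-/

open MulAction Subgroup

section

variable {p : ℕ} {G : Type*} [Group G]

theorem card_fixedPoints_modEq_card_of_pow_smul [Fact p.Prime] {H X : Type*} [Group H]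
    [MulAction H X] [Finite X] (h : ∀ g : H, ∃ k : ℕ, ∀ x : X, g ^ p ^ k • x = x) :
    Nat.card (fixedPoints H X) ≡ Nat.card X [MOD p] := by
  let R := (toPermHom H X).range
  have hR : IsPGroup p R := by
    rintro ⟨_, g, rfl⟩
    obtain ⟨k, hk⟩ := h g
    refine ⟨k, Subtype.ext ?_⟩
    rw [coe_pow, ← map_pow]
    exact Equiv.ext hk
  have hfix : fixedPoints R X = fixedPoints H X := by
    ext x
    simp [R]
  rw [← hfix]
  exact (hR.card_modEq_card_fixedPoints X).symm

theorem smul_eq_self_of_mem_normal_le {M L : Subgroup G} [hM : M.Normal] (hML : M ≤ L)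
    {m : G} (hm : m ∈ M) (x : G ⧸ L) : m • x = x := by
  induction x using QuotientGroup.induction_on with | H k => ?_
  change ((m * k : G) : G ⧸ L) = k
  rw [QuotientGroup.eq, mul_inv_rev]
  simpa using hML (hM.conj_mem _ (inv_mem hm) k⁻¹)

theorem exists_ge_not_dvd_card_fixedPoints_of_normal [Finite G] [Fact p.Prime]
    (M : Subgroup G) [M.Normal] (H : Subgroup G) (hH : ∀ h ∈ H, ∃ k : ℕ, h ^ p ^ k ∈ M) :
    ∃ L : Subgroup G, H ≤ L ∧ M ≤ L ∧ (∀ x ∈ L, ∃ k : ℕ, x ^ p ^ k ∈ M) ∧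
      ¬ p ∣ Nat.card (fixedPoints H (G ⧸ L)) := by
  have hHbar : IsPGroup p (H.map (QuotientGroup.mk' M)) := by
    rintro ⟨_, h, hh, rfl⟩
    obtain ⟨k, hk⟩ := hH h hh
    exact ⟨k, Subtype.ext <| (QuotientGroup.eq_one_iff _).mpr hk⟩
  obtain ⟨P, hHP⟩ := hHbar.exists_le_sylow
  have hML : M ≤ P.comap (QuotientGroup.mk' M) := fun m hm => by
    simp [(QuotientGroup.eq_one_iff m).mpr hm]
  refine ⟨P.comap (QuotientGroup.mk' M), map_le_iff_le_comap.mp hHP, hML, ?_, ?_⟩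
  · intro x hx
    obtain ⟨k, hk⟩ := P.isPGroup' ⟨_, hx⟩
    exact ⟨k, (QuotientGroup.eq_one_iff _).mp (congrArg Subtype.val hk)⟩
  · have hpow (h : H) : ∃ k : ℕ, ∀ x : G ⧸ P.comap (QuotientGroup.mk' M), h ^ p ^ k • x = x := by
      obtain ⟨k, hk⟩ := hH h h.2
      exact ⟨k, smul_eq_self_of_mem_normal_le hML hk⟩
    rw [(card_fixedPoints_modEq_card_of_pow_smul hpow).dvd_iff dvd_rfl, ← Subgroup.index,
      index_comap_of_surjective _ (QuotientGroup.mk'_surjective M)]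
    exact P.not_dvd_index

theorem exists_ge_not_dvd_card_fixedPoints_of_normal_subgroupOf [Finite G] [Fact p.Prime]
    {M H N : Subgroup G} (hMN : M ≤ N) [(M.subgroupOf N).Normal]
    (hHN : H ≤ N) (hH : ∀ h ∈ H, ∃ k : ℕ, h ^ p ^ k ∈ M) :
    ∃ L : Subgroup G, H ≤ L ∧ M ≤ L ∧ L ≤ N ∧ (∀ x ∈ L, ∃ k : ℕ, x ^ p ^ k ∈ M) ∧
      ¬ p ∣ Nat.card (fixedPoints (H.subgroupOf N) (N ⧸ L.subgroupOf N)) := by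
  obtain ⟨L, hHL, hML, hLpow, hfix⟩ := exists_ge_not_dvd_card_fixedPoints_of_normal
    (M.subgroupOf N) (H.subgroupOf N) fun h hh => hH h hh
  have hL : (L.map N.subtype).subgroupOf N = L :=
    comap_map_eq_self_of_injective N.subtype_injective L
  refine ⟨L.map N.subtype, ?_, ?_, map_subtype_le L, ?_, by rwa [hL]⟩
  · exact map_subgroupOf_eq_of_le hHN ▸ map_mono hHL
  · exact map_subgroupOf_eq_of_le hMN ▸ map_mono hML
  · rintro _ ⟨x, hx, rfl⟩
    exact hLpow x hx

theorem card_fixedPoints_quotient_eq_subgroupOf {H N L : Subgroup G}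
    (hHN : H ≤ N) (hN : ∀ g : G, (g : G ⧸ L) ∈ fixedPoints H (G ⧸ L) → g ∈ N) :
    Nat.card (fixedPoints H (G ⧸ L)) =
      Nat.card (fixedPoints (H.subgroupOf N) (N ⧸ L.subgroupOf N)) := by
  let f : N ⧸ L.subgroupOf N → G ⧸ L :=
    Quotient.map' Subtype.val fun a b hab => by
      rw [QuotientGroup.leftRel_apply, mem_subgroupOf] at hab
      simpa [QuotientGroup.leftRel_apply] using hab
  have hf : Function.Injective f := by
    intro x y hxy
    induction x using QuotientGroup.induction_on
    induction y using QuotientGroup.induction_on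
    exact QuotientGroup.eq.mpr (mem_subgroupOf.mpr (QuotientGroup.eq.mp hxy))
  have hsmul : ∀ (h : H.subgroupOf N) (x : N ⧸ L.subgroupOf N),
      f (h • x) = (⟨h, h.2⟩ : H) • f x := by
    intro h x
    induction x using QuotientGroup.induction_on
    rfl
  have himage : f '' fixedPoints (H.subgroupOf N) (N ⧸ L.subgroupOf N) =
      fixedPoints H (G ⧸ L) := by
    ext y
    constructor
    · rintro ⟨x, hx, rfl⟩ ⟨h, hh⟩
      rw [← hsmul ⟨⟨h, hHN hh⟩, hh⟩, hx]
    · intro hy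
      induction y using QuotientGroup.induction_on with | H g => ?_
      refine ⟨(⟨g, hN g hy⟩ : N), fun h => hf ?_, rfl⟩
      rw [hsmul]
      exact hy _
  rw [← himage, Nat.card_image_of_injective hf]

theorem isPGroup_quotient_of_pow_mem {N : Subgroup G} [N.Normal]
    (h : ∀ x : G, ∃ k : ℕ, x ^ p ^ k ∈ N) : IsPGroup p (G ⧸ N) := by
  intro q
  induction q using QuotientGroup.induction_on with | H x => ?_
  obtain ⟨k, hk⟩ := h x
  exact ⟨k, by rwa [← QuotientGroup.mk_pow, QuotientGroup.eq_one_iff]⟩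

theorem orderOf_conj (g s : G) : orderOf (g * s * g⁻¹) = orderOf s := by
  simpa using (MulAut.conj g).orderOf_eq s

theorem not_dvd_orderOf_pow_ordProj [Finite G] (hp : p.Prime) (g : G) :
    ¬ p ∣ orderOf (g ^ p ^ (orderOf g).factorization p) := by
  rw [orderOf_pow' g (pow_ne_zero _ hp.ne_zero), Nat.gcd_eq_right (Nat.ordProj_dvd _ _)]
  exact Nat.not_dvd_ordCompl hp (orderOf_pos g).ne'

theorem mem_of_pow_prime_pow_mem (hp : p.Prime) {M : Subgroup G} {x : G}
    (hx : ¬ p ∣ orderOf x) {k : ℕ} (hxk : x ^ p ^ k ∈ M) : x ∈ M := by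
  obtain ⟨m, hm⟩ := exists_pow_eq_self_of_coprime ((hp.coprime_iff_not_dvd.mpr hx).pow_left k)
  exact hm ▸ pow_mem hxk m

theorem mem_normalizer_closure_of_conj_mem [Finite G] {S : Set G} {g : G}
    (h : ∀ s ∈ S, g * s * g⁻¹ ∈ closure S) : g ∈ normalizer (closure S : Set G) := by
  have hle : (closure S).map (MulAut.conj g) ≤ closure S := by
    rw [MonoidHom.map_closure, closure_le]
    rintro _ ⟨s, hs, rfl⟩
    exact h s hs
  refine mem_normalizer_iff_map_conj_eq.mpr (eq_of_le_of_card_ge hle ?_)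
  exact (card_map_of_injective (MulAut.conj g).injective).ge

theorem conj_mem_of_mk_mem_fixedPoints {H L : Subgroup G} {g : G}
    (hg : (g : G ⧸ L) ∈ fixedPoints H (G ⧸ L)) {h : G} (hh : h ∈ H) : g⁻¹ * h * g ∈ L := by
  simpa [mul_assoc] using QuotientGroup.eq.mp (hg ⟨h⁻¹, inv_mem hh⟩)

theorem mem_normalizer_of_mk_mem_fixedPoints [Finite G] (hp : p.Prime) {H L : Subgroup G}
    (hL : ∀ x ∈ L, ∃ k : ℕ, x ^ p ^ k ∈ closure {g | g ∈ H ∧ ¬ p ∣ orderOf g}) {g : G}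
    (hg : (g : G ⧸ L) ∈ fixedPoints H (G ⧸ L)) :
    g ∈ normalizer (closure {g | g ∈ H ∧ ¬ p ∣ orderOf g} : Set G) := by
  have hconj (s : G) (hs : s ∈ {g | g ∈ H ∧ ¬ p ∣ orderOf g}) :
      g⁻¹ * s * g⁻¹⁻¹ ∈ closure {g | g ∈ H ∧ ¬ p ∣ orderOf g} := by
    have hord : ¬ p ∣ orderOf (g⁻¹ * s * g⁻¹⁻¹) := orderOf_conj g⁻¹ s ▸ hs.2
    rw [inv_inv] at hord ⊢
    obtain ⟨k, hk⟩ := hL _ (conj_mem_of_mk_mem_fixedPoints hg hs.1)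
    exact mem_of_pow_prime_pow_mem hp hord hk
  simpa using inv_mem (mem_normalizer_closure_of_conj_mem hconj)

end

theorem stmt12_general (G : Type*) [Group G] [Finite G] (p : ℕ) (hp : p.Prime)
    (H : Subgroup G)
    (M : Subgroup G) (hM : M = Subgroup.closure {g : G | g ∈ H ∧ ¬ p ∣ orderOf g}) :
    ∃ L : Subgroup G, H ≤ L ∧ M ≤ L ∧
      ∃ hn : (M.subgroupOf L).Normal,
        @IsPGroup p (L ⧸ M.subgroupOf L) (@QuotientGroup.Quotient.group _ _ _ hn) ∧
          ¬ p ∣ Nat.card (MulAction.fixedPoints H (G ⧸ L)) := by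
  have := Fact.mk hp
  subst hM
  have hHpow (h : G) (hh : h ∈ H) :
      ∃ k : ℕ, h ^ p ^ k ∈ closure {g | g ∈ H ∧ ¬ p ∣ orderOf g} :=
    ⟨_, subset_closure ⟨pow_mem hh _, not_dvd_orderOf_pow_ordProj hp h⟩⟩
  have hHN : H ≤ normalizer (closure {g | g ∈ H ∧ ¬ p ∣ orderOf g} : Set G) :=
    le_normalizer_closure_iff.mpr fun h hh s hs =>
      subset_closure ⟨mul_mem (mul_mem hh hs.1) (inv_mem hh), orderOf_conj h s ▸ hs.2⟩
  obtain ⟨L, hHL, hML, hLN, hLpow, hLfix⟩ :=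
    exists_ge_not_dvd_card_fixedPoints_of_normal_subgroupOf le_normalizer hHN hHpow
  have hn := (normal_subgroupOf_iff_le_normalizer hML).mpr hLN
  refine ⟨L, hHL, hML, hn, isPGroup_quotient_of_pow_mem fun x => hLpow x x.2, ?_⟩
  rwa [card_fixedPoints_quotient_eq_subgroupOf hHN
    fun g => mem_normalizer_of_mk_mem_fixedPoints hp hLpow]

/-- key lemma. Let `G` be a finite group, `p` a prime dividing `|G|`, `H ≤ G`,
and let `M ≤ G` be the subgroup generated by all elements of `H` whose order is not divisible by
`p`. Then there exists a subgroup `L` of `G` containing `H` (and containing `M`), such that `M`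
is normal in `L`, the quotient `L/M` is a `p`-group, and the number of `H`-fixed points
`|(G/L)^H|` is not divisible by `p`. -/
theorem stmt12 (G : Type*) [Group G] [Finite G] (p : ℕ) (hp : p.Prime)
    (hdvd : p ∣ Nat.card G) (H : Subgroup G)
    (M : Subgroup G) (hM : M = Subgroup.closure {g : G | g ∈ H ∧ ¬ p ∣ orderOf g}) :
    ∃ L : Subgroup G, H ≤ L ∧ M ≤ L ∧
      ∃ hn : (M.subgroupOf L).Normal,
        @IsPGroup p (L ⧸ M.subgroupOf L) (@QuotientGroup.Quotient.group _ _ _ hn) ∧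
          ¬ p ∣ Nat.card (MulAction.fixedPoints H (G ⧸ L)) :=
  stmt12_general G p hp H M hM
end

section
/- Let M be a cohomological Mackey functor for a finite group G whose values are ℤ[1/m]-modules where m is the product of the primes dividing |G| other than p, and let P be a Sylow p-subgroup of G. Let R ⊆ M(G/P) be the subgroup of elements x satisfying res^P_H(x) = c_g(res^P_{g⁻¹Hg}(x)) for all H ≤ P and g ∈ G with g⁻¹Hg ≤ P. Then the composite R ↪ M(G/P) → M(G/G) given by the transfer tr^G_P is an isomorphism. -/
open scoped Pointwise

lemma conj_smul_inf_aux {G : Type*} [Group G] (g : MulAut G) (K L : Subgroup G) :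
    g • (g⁻¹ • K ⊓ L) = K ⊓ g • L := by
  ext x
  simp only [Subgroup.mem_pointwise_smul_iff_inv_smul_mem, Subgroup.mem_inf, inv_inv]
  constructor
  · rintro ⟨h1, h2⟩
    refine ⟨?_, h2⟩
    simpa using h1
  · rintro ⟨h1, h2⟩
    exact ⟨by simpa using h1, h2⟩

/-- A Mackey functor for a finite group `G`, on abelian-group values `obj`. -/
structure MackeyFunctor (G : Type*) [Group G] (obj : Subgroup G → Type*)
    [∀ H, AddCommGroup (obj H)] where
  res : ∀ (K H : Subgroup G), K ≤ H → obj H →+ obj K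
  tr : ∀ (K H : Subgroup G), K ≤ H → obj K →+ obj H
  conj : ∀ (g : G) (H K : Subgroup G), MulAut.conj g • H = K → obj H →+ obj K
  res_refl : ∀ H, res H H le_rfl = AddMonoidHom.id _
  tr_refl : ∀ H, tr H H le_rfl = AddMonoidHom.id _
  res_trans : ∀ (K H L : Subgroup G) (h1 : K ≤ H) (h2 : H ≤ L),
    (res K H h1).comp (res H L h2) = res K L (h1.trans h2)
  tr_trans : ∀ (K H L : Subgroup G) (h1 : K ≤ H) (h2 : H ≤ L),
    (tr H L h2).comp (tr K H h1) = tr K L (h1.trans h2)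
  conj_refl : ∀ (H : Subgroup G) (h : MulAut.conj (1 : G) • H = H),
    conj 1 H H h = AddMonoidHom.id _
  conj_trans : ∀ (g₁ g₂ : G) (H K L : Subgroup G) (h1 : MulAut.conj g₁ • H = K)
    (h2 : MulAut.conj g₂ • K = L) (h3 : MulAut.conj (g₂ * g₁) • H = L),
    (conj g₂ K L h2).comp (conj g₁ H K h1) = conj (g₂ * g₁) H L h3
  conj_res : ∀ (g : G) (K H K' H' : Subgroup G) (hKH : K ≤ H)
    (hK : MulAut.conj g • K = K') (hH : MulAut.conj g • H = H') (hK'H' : K' ≤ H'),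
    (res K' H' hK'H').comp (conj g H H' hH) = (conj g K K' hK).comp (res K H hKH)
  conj_tr : ∀ (g : G) (K H K' H' : Subgroup G) (hKH : K ≤ H)
    (hK : MulAut.conj g • K = K') (hH : MulAut.conj g • H = H') (hK'H' : K' ≤ H'),
    (tr K' H' hK'H').comp (conj g K K' hK) = (conj g H H' hH).comp (tr K H hKH)
  mackey : ∀ (H K L : Subgroup G) (hK : K ≤ H) (hL : L ≤ H) (T : Finset G),
    (∀ t ∈ T, t ∈ H) →
    (∀ h ∈ H, ∃! t, t ∈ T ∧ ∃ k ∈ K, ∃ l ∈ L, h = k * t * l) →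
    ∀ x : obj L,
      res K H hK (tr L H hL x) =
        ∑ t ∈ T.attach,
          tr (K ⊓ MulAut.conj (t : G) • L) K inf_le_left
            (conj (t : G) ((MulAut.conj (t : G))⁻¹ • K ⊓ L) (K ⊓ MulAut.conj (t : G) • L)
              (conj_smul_inf_aux _ K L)
              (res ((MulAut.conj (t : G))⁻¹ • K ⊓ L) L inf_le_right x))

/-- A Mackey functor is *cohomological* if `tr ∘ res` is multiplication by the index. -/
def MackeyFunctor.IsCohomological {G : Type*} [Group G] {obj : Subgroup G → Type*}
    [∀ H, AddCommGroup (obj H)] (M : MackeyFunctor G obj) : Prop :=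
  ∀ (K H : Subgroup G) (h : K ≤ H) (x : obj H),
    M.tr K H h (M.res K H h x) = (K.relIndex H) • x

/-!
Restriction `res^G_P` lands in the stable elements and `tr^G_P ∘ res^G_P = [G : P]` because `M` is
cohomological. Conversely, on a stable element `x` the Mackey formula over the double cosets
`P t P` gives `res^G_P (tr^G_P x) = ∑ₜ [P : P ∩ tPt⁻¹] x = [G : P] x`, the indices summing to
`[G : P]` by counting the `P`-orbits on `G/P`. Since `[G : P]` is prime to `p`, it acts invertibly
on every value of `M`, so `tr^G_P` is injective on stable elements and onto `M(G/G)`.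
-/

theorem nsmul_bijective_of_forall_prime_dvd {A : Type*} [AddMonoid A] {n : ℕ} (hn : n ≠ 0)
    (h : ∀ q : ℕ, q.Prime → q ∣ n → Function.Bijective fun x : A => q • x) :
    Function.Bijective fun x : A => n • x := by
  induction n using Nat.recOnMul with
  | zero => exact absurd rfl hn
  | one =>
    simp only [one_nsmul]
    exact Function.bijective_id
  | prime q hq => exact h q hq dvd_rfl
  | mul a b iha ihb =>
    have ha := iha (left_ne_zero_of_mul hn) fun q hq hqa => h q hq (hqa.mul_right b)
    have hb := ihb (right_ne_zero_of_mul hn) fun q hq hqb => h q hq (hqb.mul_left a)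
    rw [show (fun x : A => (a * b) • x) = (a • ·) ∘ (b • ·) from funext fun x => mul_nsmul' x a b]
    exact ha.comp hb

section DoubleCoset

open MulAction

variable {G : Type*} [Group G] (K L : Subgroup G)

theorem QuotientGroup.subgroup_smul_mk (k : K) (t : G) :
    k • (t : G ⧸ L) = ((k * t : G) : G ⧸ L) := rfl

theorem QuotientGroup.mk_mem_orbit_iff {h t : G} :
    (h : G ⧸ L) ∈ orbit K (t : G ⧸ L) ↔ ∃ k ∈ K, ∃ l ∈ L, h = k * t * l := by
  simp only [mem_orbit_iff, Subtype.exists, QuotientGroup.subgroup_smul_mk, QuotientGroup.eq]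
  constructor
  · rintro ⟨k, hk, hkt⟩
    exact ⟨k, hk, _, hkt, by group⟩
  · rintro ⟨k, hk, l, hl, rfl⟩
    exact ⟨k, hk, by simpa [mul_assoc] using hl⟩

theorem QuotientGroup.stabilizer_subgroup_mk (t : G) :
    stabilizer K (t : G ⧸ L) = (K ⊓ MulAut.conj t • L).subgroupOf K := by
  ext ⟨k, hk⟩
  simp only [mem_stabilizer_iff, QuotientGroup.subgroup_smul_mk, QuotientGroup.eq,
    Subgroup.mem_subgroupOf, Subgroup.mem_inf, hk, true_and,
    Subgroup.mem_pointwise_smul_iff_inv_smul_mem, MulAut.smul_def, MulAut.conj_inv_apply]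
  rw [← inv_mem_iff]
  simp [mul_assoc]

theorem exists_doubleCoset_transversal_sum_relIndex [L.FiniteIndex] :
    ∃ T : Finset G, (∀ g, ∃! t, t ∈ T ∧ ∃ k ∈ K, ∃ l ∈ L, g = k * t * l) ∧
      ∑ t ∈ T, (K ⊓ MulAut.conj t • L).relIndex K = L.index := by
  classical
  let Ω := orbitRel.Quotient K (G ⧸ L)
  have : Fintype Ω := Fintype.ofFinite _
  let rep : Ω → G := fun ω => ω.out.out
  have mk_rep (ω : Ω) : (rep ω : G ⧸ L) = ω.out := Quotient.out_eq _
  have rep_injective : Function.Injective rep := fun ω ω' h =>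
    Quotient.out_injective (by rw [← mk_rep, ← mk_rep, h])
  have mem_doubleCoset_rep_iff (g : G) (ω : Ω) :
      (∃ k ∈ K, ∃ l ∈ L, g = k * rep ω * l) ↔ Quotient.mk'' (g : G ⧸ L) = ω := by
    rw [← QuotientGroup.mk_mem_orbit_iff, mk_rep, ← orbitRel.Quotient.mem_orbit,
      orbitRel.Quotient.orbit_eq_orbit_out _ Quotient.out_eq']
  refine ⟨Finset.univ.image rep, fun g => ?_, ?_⟩
  · refine ⟨rep (Quotient.mk'' (g : G ⧸ L)), ⟨Finset.mem_image_of_mem _ (Finset.mem_univ _),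
      (mem_doubleCoset_rep_iff _ _).2 rfl⟩, ?_⟩
    rintro _ ⟨ht, hg⟩
    obtain ⟨ω, -, rfl⟩ := Finset.mem_image.1 ht
    rw [(mem_doubleCoset_rep_iff _ _).1 hg]
  · calc ∑ t ∈ Finset.univ.image rep, (K ⊓ MulAut.conj t • L).relIndex K
        = ∑ ω : Ω, Nat.card (K ⧸ stabilizer K ω.out) := by
          rw [Finset.sum_image fun _ _ _ _ h => rep_injective h]
          refine Finset.sum_congr rfl fun ω _ => ?_
          rw [← mk_rep, QuotientGroup.stabilizer_subgroup_mk]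
          rfl
      _ = Nat.card (G ⧸ L) := by
          have (ω : Ω) : Finite (K ⧸ stabilizer K ω.out) :=
            .of_equiv _ (orbitEquivQuotientStabilizer K _)
          rw [← Nat.card_sigma]
          exact Nat.card_congr (selfEquivSigmaOrbitsQuotientStabilizer K _).symm
      _ = L.index := rfl

end DoubleCoset

namespace MackeyFunctor

variable {G : Type*} [Group G] {obj : Subgroup G → Type*} [∀ H, AddCommGroup (obj H)]
  (M : MackeyFunctor G obj)

def IsStable (P : Subgroup G) (x : obj P) : Prop :=
  ∀ (H : Subgroup G) (hH : H ≤ P) (g : G) (hg : MulAut.conj g⁻¹ • H ≤ P),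
    M.res H P hH x =
      M.conj g (MulAut.conj g⁻¹ • H) H (by rw [map_inv, smul_inv_smul])
        (M.res (MulAut.conj g⁻¹ • H) P hg x)

theorem conj_res_of_eq {H A B B' : Subgroup G} (g : G) (eB : B = B') (hB : B ≤ H)
    (hB' : B' ≤ H) (hBA : MulAut.conj g • B = A) (hB'A : MulAut.conj g • B' = A) (x : obj H) :
    M.conj g B A hBA (M.res B H hB x) = M.conj g B' A hB'A (M.res B' H hB' x) := by
  subst eB
  rfl

theorem tr_conj_res_of_eq {H A B : Subgroup G} (g : G) (eA : A = H) (eB : B = H) (hA : A ≤ H)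
    (hBA : MulAut.conj g • B = A) (hB : B ≤ H) (hH : MulAut.conj g • H = H) (x : obj H) :
    M.tr A H hA (M.conj g B A hBA (M.res B H hB x)) = M.conj g H H hH x := by
  subst eA eB
  rw [M.tr_refl, M.res_refl]
  rfl

/-- Conjugation acts trivially on `M(G/G)`: as `G = ⊤ * g * ⊤` is a single double coset, the
Mackey formula for `res ∘ tr` on `⊤` reads `x = c_g x`. -/
theorem conj_top_apply (g : G) (hg : MulAut.conj g • (⊤ : Subgroup G) = ⊤) (x : obj ⊤) :
    M.conj g ⊤ ⊤ hg x = x := by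
  have hT : ∀ h ∈ (⊤ : Subgroup G), ∃! t, t ∈ ({g} : Finset G) ∧
      ∃ k ∈ (⊤ : Subgroup G), ∃ l ∈ (⊤ : Subgroup G), h = k * t * l := fun h _ =>
    ⟨g, ⟨Finset.mem_singleton_self g, h * g⁻¹, trivial, 1, trivial, by group⟩,
      fun t ⟨ht, _⟩ => Finset.mem_singleton.1 ht⟩
  have hmackey := M.mackey ⊤ ⊤ ⊤ le_rfl le_rfl {g} (fun _ _ => trivial) hT x
  rw [M.res_refl, M.tr_refl, Finset.sum_attach {g} (fun t => M.tr _ ⊤ inf_le_left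
      (M.conj t _ _ (conj_smul_inf_aux _ ⊤ ⊤) (M.res _ ⊤ inf_le_right x))),
    Finset.sum_singleton, M.tr_conj_res_of_eq g (by simp) (by simp [← map_inv]) _ _ _ hg]
    at hmackey
  exact hmackey.symm

theorem isStable_res_top (P : Subgroup G) (y : obj ⊤) : M.IsStable P (M.res P ⊤ le_top y) := by
  intro H hH g hg
  simp only [← AddMonoidHom.comp_apply, M.res_trans]
  have hc := M.conj_res g (MulAut.conj g⁻¹ • H) ⊤ H ⊤ le_top
    (by rw [map_inv, smul_inv_smul]) (by simp) le_top
  rw [← hc, AddMonoidHom.comp_apply, M.conj_top_apply]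

theorem tr_conj_res_of_isStable (hcoh : M.IsCohomological) {P : Subgroup G} {x : obj P}
    (hx : M.IsStable P x) (t : G) :
    M.tr (P ⊓ MulAut.conj t • P) P inf_le_left
        (M.conj t ((MulAut.conj t)⁻¹ • P ⊓ P) (P ⊓ MulAut.conj t • P) (conj_smul_inf_aux _ P P)
          (M.res ((MulAut.conj t)⁻¹ • P ⊓ P) P inf_le_right x)) =
      (P ⊓ MulAut.conj t • P).relIndex P • x := by
  have eB : MulAut.conj t⁻¹ • (P ⊓ MulAut.conj t • P) = (MulAut.conj t)⁻¹ • P ⊓ P := by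
    rw [map_inv, ← conj_smul_inf_aux (MulAut.conj t) P P, inv_smul_smul]
  have hstable := hx (P ⊓ MulAut.conj t • P) inf_le_left t (eB ▸ inf_le_right)
  rw [M.conj_res_of_eq t eB _ inf_le_right _ (conj_smul_inf_aux _ P P)] at hstable
  rw [← hstable]
  exact hcoh _ _ _ x

theorem res_tr_top_of_isStable (hcoh : M.IsCohomological) {P : Subgroup G} [P.FiniteIndex]
    {x : obj P} (hx : M.IsStable P x) :
    M.res P ⊤ le_top (M.tr P ⊤ le_top x) = P.index • x := by
  obtain ⟨T, hT, hsum⟩ := exists_doubleCoset_transversal_sum_relIndex P P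
  rw [M.mackey ⊤ P P le_top le_top T (fun _ _ => trivial) (fun g _ => hT g) x]
  simp only [M.tr_conj_res_of_isStable hcoh hx]
  rw [Finset.sum_attach T (fun t => (P ⊓ MulAut.conj t • P).relIndex P • x), ← Finset.sum_smul,
    hsum]

theorem bijective_tr_top_of_isStable (hcoh : M.IsCohomological) (P : Subgroup G) [P.FiniteIndex]
    (hinj : Function.Injective fun x : obj P => P.index • x)
    (hsurj : Function.Surjective fun y : obj ⊤ => P.index • y) :
    Function.Bijective fun x : {x : obj P // M.IsStable P x} => M.tr P ⊤ le_top x.1 := by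
  constructor
  · rintro ⟨x, hx⟩ ⟨x', hx'⟩ h
    refine Subtype.ext (hinj ?_)
    simp only [← M.res_tr_top_of_isStable hcoh hx, ← M.res_tr_top_of_isStable hcoh hx']
    exact congrArg _ h
  · intro z
    obtain ⟨y, rfl⟩ := hsurj z
    refine ⟨⟨M.res P ⊤ le_top y, M.isStable_res_top P y⟩, ?_⟩
    rw [← Subgroup.relIndex_top_right P]
    exact hcoh P ⊤ le_top y

end MackeyFunctor

/-- Let `M` be a cohomological Mackey functor for a finite group `G` whose
values are `ℤ[1/m]`-modules, `m` the product of the primes dividing `|G|` other than `p`, and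
let `P` be a Sylow `p`-subgroup.  Let `R ⊆ M(G/P)` be the set of *stable elements*, i.e. those
`x` with `res^P_H x = c_g (res^P_{g⁻¹Hg} x)` for all `H ≤ P` and `g ∈ G` with `g⁻¹Hg ≤ P`.
Then the composite `R ↪ M(G/P) → M(G/G)` given by the transfer `tr^G_P` is an isomorphism
(a bijection; it is evidently additive). -/
theorem stmt14 (G : Type*) [Group G] [Finite G] (p : ℕ) [Fact p.Prime]
    (obj : Subgroup G → Type*) [∀ H, AddCommGroup (obj H)]
    (M : MackeyFunctor G obj) (hcoh : M.IsCohomological)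
    (hinv : ∀ q : ℕ, q.Prime → q ∣ Nat.card G → q ≠ p →
      ∀ H : Subgroup G, Function.Bijective (fun x : obj H => q • x))
    (P : Sylow p G) :
    Function.Bijective
      (fun x : {x : obj (P : Subgroup G) //
          ∀ (H : Subgroup G) (hH : H ≤ (P : Subgroup G)) (g : G)
            (hg : MulAut.conj g⁻¹ • H ≤ (P : Subgroup G)),
            M.res H (P : Subgroup G) hH x =
              M.conj g (MulAut.conj g⁻¹ • H) H
                (by rw [map_inv, smul_inv_smul])
                (M.res (MulAut.conj g⁻¹ • H) (P : Subgroup G) hg x)} =>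
        M.tr (P : Subgroup G) ⊤ le_top x.1) := by
  have index_nsmul_bijective (H : Subgroup G) :
      Function.Bijective fun x : obj H => (P : Subgroup G).index • x :=
    nsmul_bijective_of_forall_prime_dvd Subgroup.index_ne_zero_of_finite fun q hq hqn =>
      hinv q hq (hqn.trans (P : Subgroup G).index_dvd_card)
        (by rintro rfl; exact P.not_dvd_index hqn) H
  exact M.bijective_tr_top_of_isStable hcoh P (index_nsmul_bijective _).1
    (index_nsmul_bijective ⊤).2
end

section
/- Let K₄ = C₂ × C₂, V = V₁ ⊕ V₂ ⊕ V₃ the sum of its three nontrivial one-dimensional real sign representations, and n ≥ 0. The equivariant (Bredon) homology of the representation sphere S^{nV} with constant 𝔽₂ coefficients has total dimension over 𝔽₂ in degrees 0,1,…,3n given by the sequence 1, 3, 5, …, 2n−1, 2n+1, 2n, 2n−1, …, 2, 1 (odd numbers 1 to 2n+1, then descending integers 2n+1 down to 1, glued at 2n+1). -/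
/-! The mod-2 equivariant cellular chain complex of the `K₄ = C₂ × C₂`-representation sphere
`S^{nV}`, `V = V₁ ⊕ V₂ ⊕ V₃` the sum of the three sign representations, built from the smash
of the standard cell structures on the `S^{nVᵢ}`.  In degree `t` there is one basis element
`(k,l,m)` for each triple `0 ≤ k,l,m ≤ n` with `k+l+m = t`, together with a second copy
`λ(k,l,m)` when `k,l,m > 0`; the mod‑2 boundary is
`∂(k,l,m) = (1+λ)((k−1,l,m) + (k,l−1,m) + (k,l,m−1))` when `k,l,m > 0` and `0` otherwise. -/

/-- Cells of the complex in degree `t`: a triple `(k,l,m)` with entries `≤ n` summing to `t`,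
and a `Bool` marking the `λ`-copy, which exists only when all of `k,l,m` are positive. -/
def K4Cell (n t : ℕ) : Type :=
  {c : (Fin (n + 1) × Fin (n + 1) × Fin (n + 1)) × Bool //
    ((c.1.1 : ℕ) + (c.1.2.1 : ℕ) + (c.1.2.2 : ℕ) = t) ∧
    (c.2 = true → 0 < (c.1.1 : ℕ) ∧ 0 < (c.1.2.1 : ℕ) ∧ 0 < (c.1.2.2 : ℕ))}

instance (n t : ℕ) : Fintype (K4Cell n t) := by
  unfold K4Cell; infer_instance

/-- The source cell has all coordinates positive, and the target cell is obtained from it by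
decrementing exactly one coordinate. -/
def K4IsFace {n t : ℕ} (c' : K4Cell n (t + 1)) (c : K4Cell n t) : Prop :=
  (0 < (c'.1.1.1 : ℕ) ∧ 0 < (c'.1.1.2.1 : ℕ) ∧ 0 < (c'.1.1.2.2 : ℕ)) ∧
  (((c'.1.1.1 : ℕ) = (c.1.1.1 : ℕ) + 1 ∧ (c'.1.1.2.1 : ℕ) = (c.1.1.2.1 : ℕ) ∧
      (c'.1.1.2.2 : ℕ) = (c.1.1.2.2 : ℕ)) ∨
   ((c'.1.1.1 : ℕ) = (c.1.1.1 : ℕ) ∧ (c'.1.1.2.1 : ℕ) = (c.1.1.2.1 : ℕ) + 1 ∧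
      (c'.1.1.2.2 : ℕ) = (c.1.1.2.2 : ℕ)) ∨
   ((c'.1.1.1 : ℕ) = (c.1.1.1 : ℕ) ∧ (c'.1.1.2.1 : ℕ) = (c.1.1.2.1 : ℕ) ∧
      (c'.1.1.2.2 : ℕ) = (c.1.1.2.2 : ℕ) + 1))

open Classical in
/-- The mod-2 boundary map from degree `t+1` to degree `t`: a cell contributes to each of its
faces (both `λ`-copies when the face is interior, with the boundary of a cell having a zero
coordinate equal to `0`, as forced by the relation `λ(k,l,m) = (k,l,m)` when `klm = 0`). -/
noncomputable def K4Boundary (n t : ℕ) :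
    (K4Cell n (t + 1) → ZMod 2) →ₗ[ZMod 2] (K4Cell n t → ZMod 2) :=
  Matrix.mulVecLin (fun c c' => if K4IsFace c' c then (1 : ZMod 2) else 0)

/-- Cycles in degree `t`. -/
noncomputable def K4Cycles (n : ℕ) : (t : ℕ) → Submodule (ZMod 2) (K4Cell n t → ZMod 2)
  | 0 => ⊤
  | (t + 1) => LinearMap.ker (K4Boundary n t)

/-- Mod-2 Bredon homology `H_t^{K₄}(S^{nV}; 𝔽₂̲)`: cycles modulo boundaries. -/
noncomputable def K4Homology (n t : ℕ) : Type :=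
  K4Cycles n t ⧸
    (Submodule.comap (K4Cycles n t).subtype (LinearMap.range (K4Boundary n t)))

noncomputable instance (n t : ℕ) : AddCommGroup (K4Homology n t) := by
  unfold K4Homology; infer_instance

noncomputable instance (n t : ℕ) : Module (ZMod 2) (K4Homology n t) := by
  unfold K4Homology; infer_instance

/-! The two `λ`-copies of an interior cell have the same boundary, and the boundaries of the
interior triples of degree `t + 1` are linearly independent: the face `(k, l, m - 1)` of `(k, l, m)`
lies in the boundary of no other interior triple whose `k + l` is not larger. So the boundary out
of degree `t + 1` has rank `b_{t+1}`, the number of triples in `[1, n]³` of degree `t + 1`, the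
cycles in degree `t` have dimension `a_t`, the number of triples in `[0, n]³` of degree `t`, and
`dim H_t = a_t - b_{t+1}`, which a slice-by-slice count of lattice points evaluates. -/

open Finset

theorem linearIndependent_of_pivot {ι κ R α : Type*} [Ring R] [NoZeroDivisors R] [LinearOrder α]
    (v : ι → κ → R) (w : ι → α) (pivot : ι → κ) (hpivot : ∀ i, v i (pivot i) ≠ 0)
    (htriangular : ∀ i j, v j (pivot i) ≠ 0 → j = i ∨ w i < w j) :
    LinearIndependent R v := by
  classical
  rw [linearIndependent_iff']
  intro s g hg
  by_contra! hne
  obtain ⟨i, hi, hgi⟩ := hne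
  obtain ⟨i₀, hi₀, hmax⟩ := exists_max_image {j ∈ s | g j ≠ 0} w ⟨i, mem_filter.2 ⟨hi, hgi⟩⟩
  obtain ⟨hi₀s, hgi₀⟩ := mem_filter.1 hi₀
  have hsum : ∑ j ∈ s, g j * v j (pivot i₀) = g i₀ * v i₀ (pivot i₀) := by
    refine sum_eq_single_of_mem i₀ hi₀s fun j hj hji₀ => ?_
    by_contra hne
    obtain ⟨hgj, hvj⟩ := mul_ne_zero_iff.1 hne
    have := (htriangular i₀ j hvj).resolve_left hji₀
    exact (hmax j (mem_filter.2 ⟨hj, hgj⟩)).not_gt this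
  have := congrFun hg (pivot i₀)
  simp only [Finset.sum_apply, Pi.smul_apply, smul_eq_mul, Pi.zero_apply, hsum] at this
  exact mul_ne_zero hgi₀ (hpivot i₀) this

theorem Submodule.finrank_quotient_comap_subtype_of_le {K V : Type*} [DivisionRing K]
    [AddCommGroup V] [Module K V] [FiniteDimensional K V] {p q : Submodule K V} (hpq : p ≤ q) :
    Module.finrank K (q ⧸ p.comap q.subtype) = Module.finrank K q - Module.finrank K p := by
  rw [Submodule.finrank_quotient, (Submodule.comapSubtypeEquivOfLe hpq).finrank_eq]

namespace K4Cell

variable {n t : ℕ}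

def IsInterior (c : K4Cell n t) : Prop :=
  0 < (c.1.1.1 : ℕ) ∧ 0 < (c.1.1.2.1 : ℕ) ∧ 0 < (c.1.1.2.2 : ℕ)

instance (c : K4Cell n t) : Decidable c.IsInterior := by unfold IsInterior; infer_instance

def swapLambda (c : K4Cell n t) : K4Cell n t :=
  ⟨(c.1.1, if c.IsInterior then !c.1.2 else c.1.2), c.2.1, fun hb => by
    split_ifs at hb with h
    exacts [h, c.2.2 hb]⟩

theorem swapLambda_swapLambda (c : K4Cell n t) : swapLambda (swapLambda c) = c := by
  refine Subtype.ext (Prod.ext rfl ?_)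
  change (if c.IsInterior then !(swapLambda c).1.2 else (swapLambda c).1.2) = c.1.2
  by_cases h : c.IsInterior <;> simp [swapLambda, h]

theorem swapLambda_ne (c : K4Cell n t) (h : c.IsInterior) : swapLambda c ≠ c := by
  intro he
  have := congrArg (fun c : K4Cell n t => c.1.2) he
  simp [swapLambda, h] at this

end K4Cell

abbrev InteriorTriple (n t : ℕ) : Type :=
  {p : Fin (n + 1) × Fin (n + 1) × Fin (n + 1) //
    (p.1 : ℕ) + (p.2.1 : ℕ) + (p.2.2 : ℕ) = t ∧ 0 < (p.1 : ℕ) ∧ 0 < (p.2.1 : ℕ) ∧ 0 < (p.2.2 : ℕ)}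

namespace InteriorTriple

variable {n t : ℕ}

def toCell (p : InteriorTriple n t) : K4Cell n t :=
  ⟨(p.1, false), p.2.1, by simp⟩

def pivot (p : InteriorTriple n (t + 1)) : K4Cell n t :=
  ⟨((p.1.1, p.1.2.1, ⟨(p.1.2.2 : ℕ) - 1, by omega⟩), false),
    by have := p.2; simp only at this ⊢; omega, by simp⟩

theorem isFace_toCell_pivot (p : InteriorTriple n (t + 1)) : K4IsFace p.toCell p.pivot := by
  obtain ⟨_, hk, hl, hm⟩ := p.2
  exact ⟨⟨hk, hl, hm⟩, Or.inr (Or.inr ⟨rfl, rfl, by simp only [toCell, pivot]; omega⟩)⟩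

theorem eq_or_lt_of_isFace_pivot {p q : InteriorTriple n (t + 1)}
    (h : K4IsFace q.toCell p.pivot) :
    q = p ∨ (p.1.1 : ℕ) + p.1.2.1 < (q.1.1 : ℕ) + q.1.2.1 := by
  obtain ⟨_, h⟩ := h
  simp only [toCell, pivot] at h
  have := p.2.2.2.2
  rcases h with h | h | ⟨hk, hl, hm⟩
  · omega
  · omega
  · left
    apply Subtype.ext
    ext <;> simp only [Fin.val_inj] <;> omega

end InteriorTriple

abbrev BoxTriple (n t : ℕ) : Type :=
  {p : Fin (n + 1) × Fin (n + 1) × Fin (n + 1) // (p.1 : ℕ) + (p.2.1 : ℕ) + (p.2.2 : ℕ) = t}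

def K4Cell.equivSum (n t : ℕ) : K4Cell n t ≃ BoxTriple n t ⊕ InteriorTriple n t where
  toFun c := if h : c.1.2 then .inr ⟨c.1.1, c.2.1, c.2.2 h⟩ else .inl ⟨c.1.1, c.2.1⟩
  invFun := Sum.elim (fun p => ⟨(p.1, false), p.2, by simp⟩)
    (fun p => ⟨(p.1, true), p.2.1, fun _ => p.2.2⟩)
  left_inv := by
    rintro ⟨⟨p, _ | _⟩, h⟩ <;> rfl
  right_inv := by
    rintro (p | p) <;> rfl

theorem card_K4Cell (n t : ℕ) :
    Fintype.card (K4Cell n t) = Fintype.card (BoxTriple n t) + Fintype.card (InteriorTriple n t) := by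
  rw [Fintype.card_congr (K4Cell.equivSum n t), Fintype.card_sum]

section Boundary

variable {n : ℕ}

noncomputable def boundaryColumn {t : ℕ} (c' : K4Cell n (t + 1)) : K4Cell n t → ZMod 2 :=
  open Classical in fun c => if K4IsFace c' c then 1 else 0

theorem K4Boundary_apply {t : ℕ} (x : K4Cell n (t + 1) → ZMod 2) (c : K4Cell n t) :
    K4Boundary n t x c = ∑ c', boundaryColumn c' c * x c' :=
  rfl

theorem K4IsFace.isInterior {t : ℕ} {c' : K4Cell n (t + 1)} {c : K4Cell n t}
    (h : K4IsFace c' c) : c'.IsInterior :=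
  h.1

theorem K4Boundary_comp_K4Boundary (t : ℕ) (x : K4Cell n (t + 2) → ZMod 2) :
    K4Boundary n t (K4Boundary n (t + 1) x) = 0 := by
  funext c
  rw [K4Boundary_apply]
  -- both `λ`-copies of an interior cell have the same faces, so their terms cancel mod 2
  refine sum_ninvolution K4Cell.swapLambda (fun c' => ?_) (fun c' hc' => ?_) (fun _ => mem_univ _)
    K4Cell.swapLambda_swapLambda
  · exact CharTwo.add_self_eq_zero _
  · refine K4Cell.swapLambda_ne c' (K4IsFace.isInterior (c := c) ?_)
    by_contra hface
    simp [boundaryColumn, hface] at hc'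

theorem range_K4Boundary_le_K4Cycles (t : ℕ) :
    LinearMap.range (K4Boundary n t) ≤ K4Cycles n t := by
  cases t with
  | zero => exact le_top
  | succ t =>
    rintro _ ⟨x, rfl⟩
    exact K4Boundary_comp_K4Boundary t x

theorem boundaryColumn_eq_zero {t : ℕ} {c' : K4Cell n (t + 1)} (hc' : ¬c'.IsInterior) :
    boundaryColumn c' = 0 := by
  funext c
  have : ¬K4IsFace c' c := fun h => hc' h.isInterior
  simp [boundaryColumn, this]

theorem range_K4Boundary_eq_span (t : ℕ) :
    LinearMap.range (K4Boundary n t) =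
      Submodule.span (ZMod 2) (Set.range (boundaryColumn ∘ InteriorTriple.toCell (n := n))) := by
  refine (Matrix.range_mulVecLin (R := ZMod 2) fun c c' => boundaryColumn c' c).trans ?_
  refine le_antisymm (Submodule.span_le.2 ?_) (Submodule.span_mono (Set.range_comp_subset_range _ _))
  rintro _ ⟨c', rfl⟩
  by_cases hc' : c'.IsInterior
  · exact Submodule.subset_span ⟨⟨c'.1.1, c'.2.1, hc'⟩, rfl⟩
  · change boundaryColumn c' ∈ _
    rw [boundaryColumn_eq_zero hc']
    exact zero_mem _

theorem linearIndependent_boundaryColumn_toCell (t : ℕ) :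
    LinearIndependent (ZMod 2) (boundaryColumn ∘ InteriorTriple.toCell (n := n) (t := t + 1)) :=
  linearIndependent_of_pivot _ (fun p => (p.1.1 : ℕ) + p.1.2.1) InteriorTriple.pivot
    (fun p => by simp [boundaryColumn, p.isFace_toCell_pivot])
    (fun p q h => InteriorTriple.eq_or_lt_of_isFace_pivot (by
      by_contra hf; simp [boundaryColumn, hf] at h))

theorem finrank_range_K4Boundary (t : ℕ) :
    Module.finrank (ZMod 2) (LinearMap.range (K4Boundary n t)) =
      Fintype.card (InteriorTriple n (t + 1)) := by
  rw [range_K4Boundary_eq_span, finrank_span_eq_card (linearIndependent_boundaryColumn_toCell t)]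

end Boundary

theorem card_interiorTriple_zero (n : ℕ) : Fintype.card (InteriorTriple n 0) = 0 :=
  Fintype.card_eq_zero_iff.2 ⟨fun p => by have := p.2; omega⟩

theorem finrank_K4Cycles (n t : ℕ) :
    Module.finrank (ZMod 2) (K4Cycles n t) = Fintype.card (BoxTriple n t) := by
  cases t with
  | zero =>
    rw [K4Cycles, finrank_top, Module.finrank_fintype_fun_eq_card, card_K4Cell,
      card_interiorTriple_zero, add_zero]
  | succ t =>
    have := LinearMap.finrank_range_add_finrank_ker (K4Boundary n t)
    rw [finrank_range_K4Boundary, Module.finrank_fintype_fun_eq_card, card_K4Cell] at this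
    rw [K4Cycles]
    omega

theorem finrank_K4Homology (n t : ℕ) :
    Module.finrank (ZMod 2) (K4Homology n t) =
      Fintype.card (BoxTriple n t) - Fintype.card (InteriorTriple n (t + 1)) := by
  unfold K4Homology
  rw [Submodule.finrank_quotient_comap_subtype_of_le (range_K4Boundary_le_K4Cycles t),
    finrank_K4Cycles, finrank_range_K4Boundary]

section Counting

theorem sum_range_ite_add_add_eq (N k l t : ℕ) :
    ∑ m ∈ range N, (if k + l + m = t then 1 else 0) =
      if k + l ≤ t ∧ t < k + l + N then 1 else 0 := by
  induction N with
  | zero => simp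
  | succ N ih => rw [sum_range_succ, ih]; split_ifs <;> omega

theorem sum_range_ite_add_add_eq_of_pos (N k l t : ℕ) :
    ∑ m ∈ range N, (if k + l + m = t ∧ 0 < k ∧ 0 < l ∧ 0 < m then 1 else 0) =
      if 0 < k ∧ 0 < l ∧ k + l < t ∧ t < k + l + N then 1 else 0 := by
  induction N with
  | zero => rw [sum_range_zero]; split_ifs <;> omega
  | succ N ih => rw [sum_range_succ, ih]; split_ifs <;> omega

theorem sum_range_ite_add_le (N M k t : ℕ) :
    ∑ l ∈ range N, (if k + l ≤ t ∧ t < k + l + M then 1 else 0) =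
      min N (t + 1 - k) - (t + 1 - k - M) := by
  induction N with
  | zero => simp
  | succ N ih => rw [sum_range_succ, ih]; split_ifs <;> omega

theorem sum_range_ite_add_lt_of_pos (N M k t : ℕ) :
    ∑ l ∈ range N, (if 0 < k ∧ 0 < l ∧ k + l < t ∧ t < k + l + M then 1 else 0) =
      if 0 < k then min N (t - k) - max 1 (t + 1 - k - M) else 0 := by
  induction N with
  | zero => simp
  | succ N ih => rw [sum_range_succ, ih]; split_ifs <;> omega

theorem card_boxTriple (n t : ℕ) :
    Fintype.card (BoxTriple n t) = ∑ k ∈ range (n + 1), (min (n + 1) (t + 1 - k) - (t - k - n)) := by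
  have : Fintype.card (BoxTriple n t) = ∑ k ∈ range (n + 1), ∑ l ∈ range (n + 1),
      ∑ m ∈ range (n + 1), if k + l + m = t then 1 else 0 := by
    rw [Fintype.card_subtype, card_filter]
    simp only [Fintype.sum_prod_type, ← Fin.sum_univ_eq_sum_range]
  simp only [this, sum_range_ite_add_add_eq, sum_range_ite_add_le]
  exact sum_congr rfl fun k _ => by omega

theorem card_interiorTriple (n t : ℕ) :
    Fintype.card (InteriorTriple n t) = ∑ k ∈ range (n + 1),
      if 0 < k then min (n + 1) (t - k) - max 1 (t - k - n) else 0 := by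
  have : Fintype.card (InteriorTriple n t) = ∑ k ∈ range (n + 1), ∑ l ∈ range (n + 1),
      ∑ m ∈ range (n + 1), if k + l + m = t ∧ 0 < k ∧ 0 < l ∧ 0 < m then 1 else 0 := by
    rw [Fintype.card_subtype, card_filter]
    simp only [Fintype.sum_prod_type, ← Fin.sum_univ_eq_sum_range]
  simp only [this, sum_range_ite_add_add_eq_of_pos, sum_range_ite_add_lt_of_pos]
  exact sum_congr rfl fun k _ => by split_ifs <;> omega

/-- Slice `k` of the box in degree `t` exceeds slice `k` of the interior in degree `t + 1` by one
for `1 ≤ k ≤ t` with `t - k ≤ 2n`; slice `0` of the interior is empty. -/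
theorem sum_range_box_slice_eq (n t N : ℕ) :
    ∑ k ∈ range N, (min (n + 1) (t + 1 - k) - (t - k - n)) =
      ∑ k ∈ range N, (if 0 < k then min (n + 1) (t + 1 - k) - max 1 (t + 1 - k - n) else 0) +
        ((if 0 < N then min t n + 1 - (t - n) else 0) + (min N (t + 1) - max 1 (t - 2 * n))) := by
  induction N with
  | zero => simp
  | succ N ih => rw [sum_range_succ, sum_range_succ, ih]; split_ifs <;> omega

theorem card_boxTriple_eq_card_interiorTriple_add (n t : ℕ) (ht : t ≤ 3 * n) :
    Fintype.card (BoxTriple n t) =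
      Fintype.card (InteriorTriple n (t + 1)) + if t ≤ n then 2 * t + 1 else 3 * n + 1 - t := by
  rw [card_boxTriple, card_interiorTriple, sum_range_box_slice_eq]
  split_ifs <;> omega

end Counting

/-- For `K₄ = C₂ × C₂` and `V` the sum of the three sign representations,
the Bredon homology of `S^{nV}` with constant `𝔽₂` coefficients has `𝔽₂`-dimensions in degrees
`0, 1, …, 3n` given by `1, 3, 5, …, 2n−1, 2n+1, 2n, 2n−1, …, 2, 1`: the odd numbers up to
`2n+1` for `t ≤ n`, then the descending integers `3n+1−t` for `n ≤ t ≤ 3n`. -/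
theorem stmt18 (n t : ℕ) (ht : t ≤ 3 * n) :
    Module.finrank (ZMod 2) (K4Homology n t) =
      if t ≤ n then 2 * t + 1 else 3 * n + 1 - t := by
  rw [finrank_K4Homology, card_boxTriple_eq_card_interiorTriple_add n t ht, Nat.add_sub_cancel_left]
end
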